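/- arXiv:2303.10694 — 3 statements merged into one kernel-verified Lean document; each statement's English description precedes it below -/
import Mathlib

section
/- Let μ be a probability measure on a measurable space 𝒳, S : 𝒳 → ℝ a measurable score taking values in [0,1], N : 𝒳 → Set 𝒳 a neighborhood map, and c a fixed class with class-conditional coverage function q_c(t) := μ{x' : S(x') ≤ t and F*(x') = c} / μ{x' : F*(x') = c}, where F* : 𝒳 → Fin C is measurable and μ{F* = c} > 0. Fix a point x ∈ 𝒳 and a constant σ̂ ≥ 1, and suppose that for every t ∈ ℝ, μ{x' : S(x') ≤ t and x' ∈ N(x)} ≥ σ̂ · q_c(t). Then for every α̃ ∈ (0,1), the per-sample neighborhood quantile satisfies Q^NCP(α̃; x) := inf{t : μ{x' : S(x') ≤ t and x' ∈ N(x)} ≥ 1 − α̃} ≤ inf{t : q_c(t) ≥ 1 − (σ̂ − 1 + α̃)/σ̂} =: Q_class((σ̂ − 1 + α̃)/σ̂; c), provided both quantile sets are nonempty and bounded below. -/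
open MeasureTheory

/-!
Since `1 - (σ - 1 + α) / σ = (1 - α) / σ`, any threshold `t` at which the class-wise coverage
reaches the adjusted level has neighborhood coverage at least `σ · (1 - α) / σ = 1 - α`. So the
class-wise quantile set is contained in the NCP quantile set, and infima reverse inclusion.
-/

noncomputable def coverageQuantile (G : ℝ → ℝ) (β : ℝ) : ℝ :=
  sInf {t : ℝ | 1 - β ≤ G t}

lemma one_sub_adjusted_level {σ : ℝ} (hσ : 0 < σ) (α : ℝ) :
    1 - (σ - 1 + α) / σ = (1 - α) / σ := by
  field_simp
  ring

lemma setOf_le_adjusted_subset_setOf_le {G q : ℝ → ℝ} {σ : ℝ} (hσ : 0 < σ)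
    (hdom : ∀ t, σ * q t ≤ G t) (α : ℝ) :
    {t | 1 - (σ - 1 + α) / σ ≤ q t} ⊆ {t | 1 - α ≤ G t} := by
  intro t ht
  have hq : (1 - α) / σ ≤ q t := one_sub_adjusted_level hσ α ▸ ht
  calc 1 - α ≤ σ * q t := by rwa [div_le_iff₀' hσ] at hq
    _ ≤ G t := hdom t

lemma coverageQuantile_le_of_mul_le {G q : ℝ → ℝ} {σ : ℝ} (hσ : 0 < σ)
    (hdom : ∀ t, σ * q t ≤ G t) {α : ℝ}
    (hGbdd : BddBelow {t | 1 - α ≤ G t}) (hqne : {t | 1 - (σ - 1 + α) / σ ≤ q t}.Nonempty) :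
    coverageQuantile G α ≤ coverageQuantile q ((σ - 1 + α) / σ) :=
  csInf_le_csInf hGbdd hqne (setOf_le_adjusted_subset_setOf_le hσ hdom α)

theorem ncp_quantile_le_classwise_quantile_general
    {X : Type*} [MeasurableSpace X] (μ : Measure X)
    (S : X → ℝ)
    (N : X → Set X)
    {C : ℕ} (F : X → Fin C) (c : Fin C)
    (x : X) (σ : ℝ) (hσ : 1 ≤ σ)
    (hconc : ∀ t : ℝ,
      σ * ((μ {z | S z ≤ t ∧ F z = c}).toReal / (μ {z | F z = c}).toReal)
        ≤ (μ {z | S z ≤ t ∧ z ∈ N x}).toReal)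
    (α : ℝ)
    (h0bd : BddBelow {t : ℝ | 1 - α ≤ (μ {z | S z ≤ t ∧ z ∈ N x}).toReal})
    (h1ne : {t : ℝ | 1 - (σ - 1 + α) / σ ≤
        (μ {z | S z ≤ t ∧ F z = c}).toReal / (μ {z | F z = c}).toReal}.Nonempty) :
    sInf {t : ℝ | 1 - α ≤ (μ {z | S z ≤ t ∧ z ∈ N x}).toReal}
      ≤ sInf {t : ℝ | 1 - (σ - 1 + α) / σ ≤
          (μ {z | S z ≤ t ∧ F z = c}).toReal / (μ {z | F z = c}).toReal} :=
  coverageQuantile_le_of_mul_le (zero_lt_one.trans_le hσ) hconc h0bd h1ne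

/-- Step 1 connection: if the neighborhood coverage of a point `x` dominates
`σ̂` times the class-conditional coverage of its class `c`, then the
per-sample NCP quantile of `x` at level `α̃` is at most the class-wise
quantile of class `c` at the adjusted level `(σ̂ - 1 + α̃)/σ̂`. -/
theorem ncp_quantile_le_classwise_quantile
    {X : Type*} [MeasurableSpace X] (μ : Measure X) [IsProbabilityMeasure μ]
    (S : X → ℝ) (hS : Measurable S) (hS01 : ∀ z, S z ∈ Set.Icc (0 : ℝ) 1)
    (N : X → Set X)
    {C : ℕ} (F : X → Fin C) (hF : Measurable F) (c : Fin C)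
    (hc : 0 < (μ {z | F z = c}).toReal)
    (x : X) (σ : ℝ) (hσ : 1 ≤ σ)
    (hconc : ∀ t : ℝ,
      σ * ((μ {z | S z ≤ t ∧ F z = c}).toReal / (μ {z | F z = c}).toReal)
        ≤ (μ {z | S z ≤ t ∧ z ∈ N x}).toReal)
    (α : ℝ) (hα : α ∈ Set.Ioo (0 : ℝ) 1)
    (h0ne : {t : ℝ | 1 - α ≤ (μ {z | S z ≤ t ∧ z ∈ N x}).toReal}.Nonempty)
    (h0bd : BddBelow {t : ℝ | 1 - α ≤ (μ {z | S z ≤ t ∧ z ∈ N x}).toReal})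
    (h1ne : {t : ℝ | 1 - (σ - 1 + α) / σ ≤
        (μ {z | S z ≤ t ∧ F z = c}).toReal / (μ {z | F z = c}).toReal}.Nonempty)
    (h1bd : BddBelow {t : ℝ | 1 - (σ - 1 + α) / σ ≤
        (μ {z | S z ≤ t ∧ F z = c}).toReal / (μ {z | F z = c}).toReal}) :
    sInf {t : ℝ | 1 - α ≤ (μ {z | S z ≤ t ∧ z ∈ N x}).toReal}
      ≤ sInf {t : ℝ | 1 - (σ - 1 + α) / σ ≤
          (μ {z | S z ≤ t ∧ F z = c}).toReal / (μ {z | F z = c}).toReal} :=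
  ncp_quantile_le_classwise_quantile_general μ S N F c x σ hσ hconc α h0bd h1ne
end

section
/- Let C ≥ 1, let p : Fin C → ℝ be a probability vector (p_c ≥ 0 for all c and Σ_c p_c = 1) with p_c ≥ P_min > 0 for every c, let α̃ ∈ [0,1], let a, b : Fin C → ℝ take values in [0,1], and let R ⊆ Fin C be a subset such that: (i) a_c ≥ 1 − α̃ for every c ∈ R; (ii) a_c ≥ b_c for every c ∉ R; (iii) Σ_c p_c · b_c ≥ 1 − α̃; and (iv) Σ_{c ∈ R} p_c ≤ 1 − P_min. Then Σ_c p_c · a_c ≥ 1 − α̃ · (2 − P_min). -/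
open Finset

/-- On `R` the bound `a ≥ 1 - α` replaces `b ≤ 1`, costing `α` per unit of weight;
off `R`, `a` dominates `b`. -/
theorem sum_mul_sub_mul_sum_le_sum_mul {ι : Type*} [Fintype ι] [DecidableEq ι]
    (p a b : ι → ℝ) (α : ℝ) (R : Finset ι) (hp : ∀ c, 0 ≤ p c)
    (hb : ∀ c ∈ R, b c ≤ 1) (hR : ∀ c ∈ R, 1 - α ≤ a c) (hRc : ∀ c ∉ R, b c ≤ a c) :
    ∑ c, p c * b c - α * ∑ c ∈ R, p c ≤ ∑ c, p c * a c := by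
  have hRb : ∑ c ∈ R, p c * b c ≤ ∑ c ∈ R, p c :=
    sum_le_sum fun c hc => mul_le_of_le_one_right (hp c) (hb c hc)
  have hRa : ∑ c ∈ R, p c * (1 - α) ≤ ∑ c ∈ R, p c * a c :=
    sum_le_sum fun c hc => mul_le_mul_of_nonneg_left (hR c hc) (hp c)
  have hRca : ∑ c ∈ Rᶜ, p c * b c ≤ ∑ c ∈ Rᶜ, p c * a c :=
    sum_le_sum fun c hc => mul_le_mul_of_nonneg_left (hRc c (mem_compl.mp hc)) (hp c)
  rw [← sum_add_sum_compl R fun c => p c * a c, ← sum_add_sum_compl R fun c => p c * b c]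
  rw [← sum_mul] at hRa
  linarith

theorem classwise_coverage_mixing_general
    {C : ℕ}
    (p : Fin C → ℝ) (hp : ∀ c, 0 ≤ p c)
    (Pmin : ℝ)
    (α : ℝ) (hα : α ∈ Set.Icc (0 : ℝ) 1)
    (a b : Fin C → ℝ)
    (hb : ∀ c, b c ∈ Set.Icc (0 : ℝ) 1)
    (R : Finset (Fin C))
    (hR1 : ∀ c ∈ R, 1 - α ≤ a c)
    (hR2 : ∀ c ∉ R, b c ≤ a c)
    (hbcov : 1 - α ≤ ∑ c, p c * b c)
    (hRmass : ∑ c ∈ R, p c ≤ 1 - Pmin) :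
    1 - α * (2 - Pmin) ≤ ∑ c, p c * a c := by
  have hloss := sum_mul_sub_mul_sum_le_sum_mul p a b α R hp (fun c _ => (hb c).2) hR1 hR2
  linarith [mul_le_mul_of_nonneg_left hRmass hα.1]

/-- Abstract form of the class-wise coverage comparison (Step 2): mixing the
class-conditional coverages `a c` of the class-wise quantiles over the class
probabilities `p c` yields marginal coverage at least `1 - α̃ (2 - P_min)`. -/
theorem classwise_coverage_mixing
    {C : ℕ} (hC : 1 ≤ C)
    (p : Fin C → ℝ) (hp : ∀ c, 0 ≤ p c) (hsum : ∑ c, p c = 1)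
    (Pmin : ℝ) (hPmin : 0 < Pmin) (hpmin : ∀ c, Pmin ≤ p c)
    (α : ℝ) (hα : α ∈ Set.Icc (0 : ℝ) 1)
    (a b : Fin C → ℝ)
    (ha : ∀ c, a c ∈ Set.Icc (0 : ℝ) 1) (hb : ∀ c, b c ∈ Set.Icc (0 : ℝ) 1)
    (R : Finset (Fin C))
    (hR1 : ∀ c ∈ R, 1 - α ≤ a c)
    (hR2 : ∀ c ∉ R, b c ≤ a c)
    (hbcov : 1 - α ≤ ∑ c, p c * b c)
    (hRmass : ∑ c ∈ R, p c ≤ 1 - Pmin) :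
    1 - α * (2 - Pmin) ≤ ∑ c, p c * a c :=
  classwise_coverage_mixing_general p hp Pmin α hα a b hb R hR1 hR2 hbcov hRmass
end

section
/- Let μ be a probability measure on a measurable space 𝒳, S : 𝒳 → ℝ a measurable score, F* : 𝒳 → Fin C a measurable label map with p_c := μ{F* = c} ≥ P_min > 0 for every class c, α̃ ∈ [0,1], Q : Fin C → ℝ a per-class threshold, and q ∈ ℝ a global threshold with μ{x : S(x) ≤ q} ≥ 1 − α̃. Let R := {c : Q(c) ≤ q} and suppose that for every c ∈ R the class-conditional coverage μ{S ≤ Q(c) and F* = c}/p_c ≥ 1 − α̃, and that Σ_{c ∈ R} p_c ≤ 1 − P_min. Then the marginal coverage of the class-dependent rule satisfies μ{x : S(x) ≤ Q(F*(x))} ≥ 1 − α̃ · (2 − P_min). -/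
/-!
Split every event along the classes. On a class `c` with `Q c ≤ q` the class-conditional
coverage gives mass at least `(1 - α) p_c`, which falls short of the class's share of the
global event by at most `α p_c`; on a class with `Q c > q` the class-dependent event contains
the global one. Summing, the rule loses at most `α · ∑_{c ∈ R} p_c ≤ α (1 - P_min)` against the
global coverage `1 - α`.
-/

open MeasureTheory

namespace MeasureTheory

variable {X ι : Type*} [MeasurableSpace X] [MeasurableSpace ι] [MeasurableSingletonClass ι]

/-- Unlike `measure_biUnion_finset`, the pieces `T ∩ F ⁻¹' {c}` need not be measurable. -/
theorem measure_eq_tsum_measure_inter_fiber [Countable ι] (μ : Measure X) {F : X → ι}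
    (hF : Measurable F) (T : Set X) : μ T = ∑' c, μ (T ∩ F ⁻¹' {c}) := by
  have hfib : ∀ c, MeasurableSet (F ⁻¹' {c}) := fun c => hF (measurableSet_singleton c)
  have hdisj : Pairwise (Function.onFun Disjoint fun c => F ⁻¹' {c}) := fun c c' h =>
    Set.disjoint_singleton.2 h |>.preimage F
  calc μ T = μ.restrict (⋃ c, F ⁻¹' {c}) T := by
        rw [← Set.preimage_iUnion, Set.iUnion_singleton_eq_range, Set.range_id',
          Set.preimage_univ, Measure.restrict_univ]
    _ = ∑' c, μ (T ∩ F ⁻¹' {c}) := by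
        rw [Measure.restrict_iUnion hdisj hfib, Measure.sum_apply_of_countable]
        simp only [Measure.restrict_apply' (hfib _)]

theorem measureReal_setOf_eq_sum_fiber [Fintype ι] (μ : Measure X) [IsFiniteMeasure μ]
    {F : X → ι} (hF : Measurable F) (P : X → ι → Prop) :
    μ.real {x | P x (F x)} = ∑ c, μ.real {x | P x c ∧ F x = c} := by
  have hpiece : ∀ c, {x | P x (F x)} ∩ F ⁻¹' {c} = {x | P x c ∧ F x = c} := fun c =>
    Set.ext fun x =>
      ⟨fun ⟨h, hc⟩ => ⟨hc ▸ h, hc⟩, fun ⟨h, hc⟩ => ⟨show P x (F x) from hc ▸ h, hc⟩⟩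
  rw [measureReal_def, measure_eq_tsum_measure_inter_fiber μ hF, tsum_fintype,
    ENNReal.toReal_sum fun c _ => measure_ne_top μ _]
  simp only [hpiece, measureReal_def]

end MeasureTheory

theorem classwise_rule_marginal_coverage_general
    {X : Type*} [MeasurableSpace X] (μ : Measure X) [IsProbabilityMeasure μ]
    (S : X → ℝ)
    {C : ℕ} (F : X → Fin C) (hF : Measurable F)
    (Pmin : ℝ)
    (α : ℝ) (hα : α ∈ Set.Icc (0 : ℝ) 1)
    (Q : Fin C → ℝ) (q : ℝ)
    (hq : 1 - α ≤ (μ {x | S x ≤ q}).toReal)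
    (hR : ∀ c : Fin C, Q c ≤ q →
      1 - α ≤ (μ {x | S x ≤ Q c ∧ F x = c}).toReal / (μ {x | F x = c}).toReal)
    (hRmass : ∑ c ∈ Finset.univ.filter (fun c => Q c ≤ q),
        (μ {x | F x = c}).toReal ≤ 1 - Pmin) :
    1 - α * (2 - Pmin) ≤ (μ {x | S x ≤ Q (F x)}).toReal := by
  simp only [← measureReal_def] at hq hR hRmass ⊢
  have hrule := measureReal_setOf_eq_sum_fiber μ hF fun x c => S x ≤ Q c
  have hglobal := measureReal_setOf_eq_sum_fiber μ hF fun x _ => S x ≤ q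
  have hterm : ∀ c, μ.real {x | S x ≤ q ∧ F x = c}
      - α * (if Q c ≤ q then μ.real {x | F x = c} else 0)
      ≤ μ.real {x | S x ≤ Q c ∧ F x = c} := fun c => by
    split_ifs with hc
    · have hcov := mul_le_of_le_div₀ measureReal_nonneg measureReal_nonneg (hR c hc)
      have hsub : μ.real {x | S x ≤ q ∧ F x = c} ≤ μ.real {x | F x = c} :=
        measureReal_mono fun x hx => hx.2
      linarith
    · have hsub : {x | S x ≤ q ∧ F x = c} ⊆ {x | S x ≤ Q c ∧ F x = c} :=
        fun x hx => ⟨hx.1.trans (le_of_not_ge hc), hx.2⟩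
      simpa using measureReal_mono (μ := μ) hsub
  have hsum := Finset.sum_le_sum fun c (_ : c ∈ Finset.univ) => hterm c
  rw [Finset.sum_sub_distrib, ← Finset.mul_sum, ← Finset.sum_filter] at hsum
  linarith [mul_le_mul_of_nonneg_left hRmass hα.1]

/-- Step 2 (measure-theoretic form): if the global threshold `q` has marginal
coverage at least `1 - α̃`, the class-wise thresholds `Q c` have
class-conditional coverage at least `1 - α̃` on the robust set
`R = {c | Q c ≤ q}`, and the robust set has mass at most `1 - P_min`, then the
class-dependent rule `x ↦ Q (F* x)` has marginal coverage at least
`1 - α̃ (2 - P_min)`. -/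
theorem classwise_rule_marginal_coverage
    {X : Type*} [MeasurableSpace X] (μ : Measure X) [IsProbabilityMeasure μ]
    (S : X → ℝ) (hS : Measurable S)
    {C : ℕ} (F : X → Fin C) (hF : Measurable F)
    (Pmin : ℝ) (hPmin : 0 < Pmin)
    (hpmin : ∀ c : Fin C, Pmin ≤ (μ {x | F x = c}).toReal)
    (α : ℝ) (hα : α ∈ Set.Icc (0 : ℝ) 1)
    (Q : Fin C → ℝ) (q : ℝ)
    (hq : 1 - α ≤ (μ {x | S x ≤ q}).toReal)
    (hR : ∀ c : Fin C, Q c ≤ q →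
      1 - α ≤ (μ {x | S x ≤ Q c ∧ F x = c}).toReal / (μ {x | F x = c}).toReal)
    (hRmass : ∑ c ∈ Finset.univ.filter (fun c => Q c ≤ q),
        (μ {x | F x = c}).toReal ≤ 1 - Pmin) :
    1 - α * (2 - Pmin) ≤ (μ {x | S x ≤ Q (F x)}).toReal :=
  classwise_rule_marginal_coverage_general μ S F hF Pmin α hα Q q hq hR hRmass
end
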